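/- arXiv:2502.17721 — 2 statements merged into one kernel-verified Lean document; each statement's English description precedes it below -/
import Mathlib

section
/- Let p* be the RLHF-optimal policy p*(z) = p̄(z) exp(r(z)/β)/G over a finite space. Then the reward admits the representation r(z) = β log(p*(z)/p̄(z)) + β log G, and consequently the Bradley-Terry preference induced by r satisfies Pref(z ≻ z') = (p*(z)/p̄(z))^β / ((p*(z)/p̄(z))^β + (p*(z')/p̄(z'))^β). -/
theorem stmt_5 {Z : Type*} [Fintype Z] [Nonempty Z] (r : Z → ℝ) (pbar : Z → ℝ)
    (hpbar : ∀ z, 0 < pbar z) (hpbar1 : ∑ z, pbar z = 1) (β : ℝ) (hβ : 0 < β)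
    (G : ℝ) (hG : G = ∑ z', pbar z' * Real.exp (r z' / β))
    (pstar : Z → ℝ) (hpstar : ∀ z, pstar z = pbar z * Real.exp (r z / β) / G)
    (Pref : Z → Z → ℝ)
    (hPref : ∀ z z', Pref z z' = Real.exp (r z) / (Real.exp (r z) + Real.exp (r z'))) :
    (∀ z, r z = β * Real.log (pstar z / pbar z) + β * Real.log G) ∧
      (∀ z z', Pref z z' =
        (pstar z / pbar z) ^ β /
          ((pstar z / pbar z) ^ β + (pstar z' / pbar z') ^ β)) := by
  have hGpos : 0 < G := by
    rw [hG]
    exact Finset.sum_pos (fun z _ => mul_pos (hpbar z) (Real.exp_pos _))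
      Finset.univ_nonempty
  have hratio : ∀ z, pstar z / pbar z = Real.exp (r z / β) / G := by
    intro z
    rw [hpstar z, div_right_comm, mul_div_cancel_left₀ _ (hpbar z).ne']
  constructor
  · intro z
    rw [hratio z, Real.log_div (Real.exp_ne_zero _) hGpos.ne', Real.log_exp]
    field_simp
    ring
  · intro z z'
    have hpow : ∀ w, (pstar w / pbar w) ^ (β : ℝ) = Real.exp (r w) / G ^ (β : ℝ) := by
      intro w
      rw [hratio w, Real.div_rpow (Real.exp_pos _).le hGpos.le,
        ← Real.exp_mul, div_mul_cancel₀ _ hβ.ne']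
    have hGb : (0:ℝ) < G ^ (β : ℝ) := Real.rpow_pos_of_pos hGpos β
    rw [hPref, hpow, hpow, ← add_div]
    rw [div_div_div_cancel_right₀]
    exact hGb.ne'
end

section
/- If the reference distribution p̄ is uniform on a finite output space Z, then the RLHF-optimal policy p*(z) = p̄(z) exp(r(z)/β)/G is β-perfectly aligned with the Bradley-Terry preference oracle induced by r: for all z, z', exp(r(z))/(exp(r(z)) + exp(r(z'))) = p*(z)^β/(p*(z)^β + p*(z')^β). -/
/-!
With a uniform reference distribution the optimal policy is `p* = k · exp (r / β)` for the
constant `k = 1 / (|Z| G) > 0`, so `p* ^ β = k ^ β · exp r`. The Bradley–Terry ratio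
`a / (a + b)` is invariant under a common positive scaling of `a` and `b`, and `k ^ β` cancels.
-/

open Real

lemma Real.exp_div_rpow (x : ℝ) {β : ℝ} (hβ : β ≠ 0) : exp (x / β) ^ β = exp x := by
  rw [← exp_mul, div_mul_cancel₀ x hβ]

lemma mul_div_mul_add_mul_left {K : Type*} [Field K] {c : K} (hc : c ≠ 0) (a b : K) :
    c * a / (c * a + c * b) = a / (a + b) := by
  rw [← mul_add, mul_div_mul_left _ _ hc]

theorem stmt_6 {Z : Type*} [Fintype Z] [Nonempty Z] (r : Z → ℝ) (β : ℝ) (hβ : 0 < β)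
    (pbar : Z → ℝ) (hpbar : ∀ z, pbar z = 1 / (Fintype.card Z : ℝ))
    (G : ℝ) (hG : G = ∑ z', pbar z' * Real.exp (r z' / β))
    (pstar : Z → ℝ) (hpstar : ∀ z, pstar z = pbar z * Real.exp (r z / β) / G) :
    ∀ z z', Real.exp (r z) / (Real.exp (r z) + Real.exp (r z')) =
      (pstar z) ^ β / ((pstar z) ^ β + (pstar z') ^ β) := by
  intro z z'
  have hG_pos : 0 < G := by
    simp only [hG, hpbar]
    positivity
  set k := 1 / (Fintype.card Z * G)
  have hk : 0 < k := by positivity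
  have hpstar_pow (w : Z) : pstar w ^ β = k ^ β * exp (r w) := by
    have hpstar_eq : pstar w = k * exp (r w / β) := by
      rw [hpstar, hpbar]
      ring
    rw [hpstar_eq, mul_rpow hk.le (exp_pos _).le, exp_div_rpow _ hβ.ne']
  rw [hpstar_pow, hpstar_pow, mul_div_mul_add_mul_left (rpow_pos_of_pos hk β).ne']
end
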